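/- arXiv:2209.02588 — 2 statements merged into one kernel-verified Lean document; each statement's English description precedes it below -/
import Mathlib

section
/- For natural numbers m, n, r, l with l ≤ r, the sum over k from 0 to r of (k!/(k-l)!) * C(m, k) * C(n, r-k) equals (m!/(m-l)!) * C(m+n-l, r-l), where k!/(k-l)! is interpreted as 0 when k < l and m!/(m-l)! as 0 when m < l. -/
/-! Choosing a `k`-subset of an `m`-set and then an ordered `l`-tuple inside it is the same as
choosing the ordered `l`-tuple first and then the remaining `k - l` elements among `m - l`.
After this rewriting the sum is `m!/(m-l)!` times Vandermonde's convolution for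
`C(m - l + n, r - l)`. -/

open Finset

namespace Nat

theorem descFactorial_mul_choose {k l : ℕ} (m : ℕ) (hlk : l ≤ k) :
    k.descFactorial l * m.choose k = m.descFactorial l * (m - l).choose (k - l) := by
  rw [descFactorial_eq_factorial_mul_choose, descFactorial_eq_factorial_mul_choose, mul_assoc,
    mul_assoc, mul_comm (k.choose l), choose_mul hlk]

theorem add_choose_eq_sum_range (m n k : ℕ) :
    (m + n).choose k = ∑ i ∈ range (k + 1), m.choose i * n.choose (k - i) := by
  rw [add_choose_eq, Nat.sum_antidiagonal_eq_sum_range_succ_mk]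

end Nat

theorem general_vandermonde (m n r l : ℕ) (hl : l ≤ r) :
    ∑ k ∈ Finset.range (r + 1),
        Nat.descFactorial k l * Nat.choose m k * Nat.choose n (r - k)
      = Nat.descFactorial m l * Nat.choose (m + n - l) (r - l) := by
  obtain ⟨s, rfl⟩ : ∃ s, r = l + s := ⟨r - l, by omega⟩
  have low_terms : ∑ k ∈ range l, k.descFactorial l * m.choose k * n.choose (l + s - k) = 0 :=
    sum_eq_zero fun k hk => by
      rw [Nat.descFactorial_eq_zero_iff_lt.2 (mem_range.1 hk), zero_mul, zero_mul]
  rw [add_assoc, sum_range_add, low_terms, zero_add, Nat.add_sub_cancel_left]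
  simp_rw [Nat.descFactorial_mul_choose m (Nat.le_add_right l _), Nat.add_sub_cancel_left,
    Nat.add_sub_add_left, mul_assoc, ← mul_sum, ← Nat.add_choose_eq_sum_range]
  rcases Nat.lt_or_ge m l with hml | hlm
  · rw [Nat.descFactorial_eq_zero_iff_lt.2 hml, zero_mul, zero_mul]
  · rw [Nat.sub_add_comm hlm]
end

section
/- For natural numbers m, n, r, l with l ≤ m, the coefficient of x^(r-l) in (m!/(m-l)!) * (1+x)^(m+n-l) equals the sum over k from l to r of (k!/(k-l)!) * C(m, k) * C(n, r-k). -/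
/-! Since `k.descFactorial l * m.choose k = m.descFactorial l * (m - l).choose (k - l)`, the factor
`m.descFactorial l` comes out of every summand, and what remains is Vandermonde's convolution
for `(m - l + n).choose (r - l)`, the coefficient of `X ^ (r - l)` in `(X + 1) ^ (m + n - l)`. -/

open Finset Polynomial

theorem Nat.descFactorial_mul_choose_of_le {k l : ℕ} (m : ℕ) (hlk : l ≤ k) :
    k.descFactorial l * m.choose k = m.descFactorial l * (m - l).choose (k - l) := by
  simp only [Nat.descFactorial_eq_factorial_mul_choose, mul_assoc, ← Nat.choose_mul hlk]
  ring

theorem Nat.sum_Icc_choose_sub_mul_choose (a n : ℕ) {l r : ℕ} (hlr : l ≤ r) :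
    ∑ k ∈ Icc l r, a.choose (k - l) * n.choose (r - k) = (a + n).choose (r - l) := by
  rw [Nat.add_choose_eq, Nat.sum_antidiagonal_eq_sum_range_succ_mk, ← Ico_add_one_right_eq_Icc,
    sum_Ico_eq_sum_range, show r + 1 - l = r - l + 1 by omega]
  refine sum_congr rfl fun i _ => ?_
  rw [Nat.add_sub_cancel_left, show r - (l + i) = r - l - i by omega]

theorem Nat.descFactorial_mul_add_choose (m n : ℕ) {l r : ℕ} (hlm : l ≤ m) (hlr : l ≤ r) :
    m.descFactorial l * (m + n - l).choose (r - l)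
      = ∑ k ∈ Icc l r, k.descFactorial l * m.choose k * n.choose (r - k) := by
  rw [Nat.sub_add_comm hlm, ← Nat.sum_Icc_choose_sub_mul_choose _ _ hlr, mul_sum]
  refine sum_congr rfl fun k hk => ?_
  rw [Nat.descFactorial_mul_choose_of_le m (mem_Icc.1 hk).1, mul_assoc]

theorem coeff_general_general (m n r l : ℕ) (hlm : l ≤ m) (hlr : l ≤ r) :
    ((Nat.descFactorial m l : Polynomial ℚ) * (Polynomial.X + 1) ^ (m + n - l)).coeff (r - l)
      = ∑ k ∈ Finset.Icc l r,
          (Nat.descFactorial k l : ℚ) * (Nat.choose m k : ℚ) * (Nat.choose n (r - k) : ℚ) := by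
  rw [← C_eq_natCast, coeff_C_mul, coeff_X_add_one_pow]
  exact_mod_cast Nat.descFactorial_mul_add_choose m n hlm hlr

theorem coeff_general (m n r l : ℕ) (hlm : l ≤ m) (hlr : l ≤ r) (hr : r ≤ m + n) :
    ((Nat.descFactorial m l : Polynomial ℚ) * (Polynomial.X + 1) ^ (m + n - l)).coeff (r - l)
      = ∑ k ∈ Finset.Icc l r,
          (Nat.descFactorial k l : ℚ) * (Nat.choose m k : ℚ) * (Nat.choose n (r - k) : ℚ) :=
  coeff_general_general m n r l hlm hlr
end
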